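/- arXiv:math-ph/0504051 — 2 statements merged into one kernel-verified Lean document; each statement's English description precedes it below -/
import Mathlib

section
/- Let A, B, C be self-adjoint operators on a Hilbert space with A ≥ 0, B ≥ 1, C ≥ 1, and suppose B commutes with C. If A ≤ B and A ≤ C, then for all α, β ≥ 0 with α + β = 1, one has A ≤ B^α C^β. -/
/-!
Conjugating by `c^(-1/2)` turns the hypotheses into `t ≤ 1` and `t ≤ b c⁻¹` for
`t = c^(-1/2) a c^(-1/2) ≥ 0`. As `0 ≤ t ≤ 1`, `t ≤ t^α`, and operator monotonicity of
`x ↦ x^α` gives `t^α ≤ (b c⁻¹)^α = b^α c^(-α)`; conjugating back by `c^(1/2)` yields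
`a ≤ b^α c^(1-α)`. All powers of the commuting elements `b`, `c` that occur are written as
`exp (s • log b + t • log c)`, so that they commute and multiply by adding exponents.
-/

open NormedSpace Set

lemma Commute.smul_add_smul {R A : Type*} [CommSemiring R] [Semiring A] [Module R A]
    [SMulCommClass R A A] [IsScalarTower R A A] {l m : A} (h : Commute l m) (s t s' t' : R) :
    Commute (s • l + t • m) (s' • l + t' • m) := by
  have hl : Commute (s • l + t • m) l :=
    ((Commute.refl l).smul_left s).add_left (h.symm.smul_left t)
  have hm : Commute (s • l + t • m) m :=
    (h.smul_left s).add_left ((Commute.refl m).smul_left t)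
  exact (hl.smul_right s').add_right (hm.smul_right t')

namespace CFC

variable {A : Type*} [CStarAlgebra A] [PartialOrder A] [StarOrderedRing A]

lemma rpow_eq_exp_smul_log {a : A} (ha : IsStrictlyPositive a) (p : ℝ) :
    a ^ p = exp (p • log a) := by
  have hspec := (StarOrderedRing.isStrictlyPositive_iff_spectrum_pos (R := ℝ) a).1 ha
  have hlog : ContinuousOn Real.log (spectrum ℝ a) :=
    Real.continuousOn_log.mono fun t ht => (hspec t ht).ne'
  rw [rpow_eq_cfc_real ha.nonneg, ← real_exp_eq_normedSpace_exp, log, ← cfc_smul ..,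
    ← cfc_comp' Real.exp (fun t => p • Real.log t) a (hf := hlog.const_smul p)]
  refine cfc_congr fun t ht => ?_
  rw [smul_eq_mul, Real.rpow_def_of_pos (hspec t ht), mul_comm]

lemma _root_.IsSelfAdjoint.isStrictlyPositive_exp {x : A} (hx : IsSelfAdjoint x) :
    IsStrictlyPositive (exp x) :=
  let +nondep : NormedAlgebra ℚ A := .restrictScalars ℚ ℂ A
  ⟨hx.exp_nonneg, isUnit_exp x⟩

lemma exp_rpow {x : A} (hx : IsSelfAdjoint x) (p : ℝ) : exp x ^ p = exp (p • x) := by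
  rw [rpow_eq_exp_smul_log hx.isStrictlyPositive_exp, log_exp x hx]

lemma self_le_rpow_of_le_one {a : A} (ha₀ : 0 ≤ a) (ha₁ : a ≤ 1) {p : ℝ}
    (hp : p ∈ Icc 0 1) : a ≤ a ^ p := by
  have hspec := (CFC.le_one_iff (R := ℝ) a).1 ha₁
  conv_lhs => rw [← cfc_id' ℝ a]
  rw [rpow_eq_cfc_real ha₀]
  refine cfc_mono (hg := (Real.continuous_rpow_const hp.1).continuousOn) fun t ht => ?_
  exact Real.self_le_rpow_of_le_one (spectrum_nonneg_of_nonneg ha₀ ht) (hspec t ht) hp.2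

theorem le_rpow_mul_rpow_of_le_of_le {a b c : A} (ha : 0 ≤ a) (hb : IsStrictlyPositive b)
    (hc : IsStrictlyPositive c) (hbc : Commute b c) (hab : a ≤ b) (hac : a ≤ c)
    {α β : ℝ} (hα : 0 ≤ α) (hβ : 0 ≤ β) (hαβ : α + β = 1) :
    a ≤ b ^ α * c ^ β := by
  let +nondep : NormedAlgebra ℚ A := .restrictScalars ℚ ℂ A
  have hα₁ : α ∈ Icc 0 1 := ⟨hα, by linarith⟩
  have hlog : Commute (log b) (log c) := ((hbc.cfc_real Real.log).symm.cfc_real Real.log).symm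
  set e : ℝ → ℝ → A := fun s t => exp (s • log b + t • log c) with he
  have hsa (s t : ℝ) : IsSelfAdjoint (s • log b + t • log c) :=
    ((IsSelfAdjoint.all s).smul .log).add ((IsSelfAdjoint.all t).smul .log)
  have he_sa (s t : ℝ) : IsSelfAdjoint (e s t) := (hsa s t).isStrictlyPositive_exp.isSelfAdjoint
  have he_mul (s t s' t' : ℝ) : e s t * e s' t' = e (s + s') (t + t') := by
    simp only [he, ← exp_add_of_commute (hlog.smul_add_smul s t s' t'), add_smul]
    congr 1; abel
  have he_rpow (s t p : ℝ) : e s t ^ p = e (p * s) (p * t) := by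
    rw [exp_rpow (hsa s t), smul_add, smul_smul, smul_smul]
  have hb_eq : b = e 1 0 := by simp [he, exp_log b hb]
  have hc_eq : c = e 0 1 := by simp [he, exp_log c hc]
  have he_zero : e 0 0 = 1 := by simp [he]
  set k := e 0 (-(1 / 2))
  set t := k * a * k
  have ht_nonneg : 0 ≤ t := (he_sa _ _).conjugate_nonneg ha
  have ht_le_one : t ≤ 1 := by
    calc t ≤ k * c * k := (he_sa _ _).conjugate_le_conjugate hac
      _ = 1 := by rw [hc_eq, he_mul, he_mul, ← he_zero]; norm_num
  have ht_le : t ≤ e α (-α) := by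
    calc t ≤ t ^ α := self_le_rpow_of_le_one ht_nonneg ht_le_one hα₁
      _ ≤ (k * b * k) ^ α := rpow_le_rpow hα₁ ((he_sa _ _).conjugate_le_conjugate hab)
      _ = e α (-α) := by rw [hb_eq, he_mul, he_mul, he_rpow]; norm_num
  calc a = e 0 (1 / 2) * t * e 0 (1 / 2) := by
        simp only [t, k, ← mul_assoc, he_mul]; rw [mul_assoc, he_mul]; norm_num [he_zero]
    _ ≤ e 0 (1 / 2) * e α (-α) * e 0 (1 / 2) := (he_sa _ _).conjugate_le_conjugate ht_le
    _ = b ^ α * c ^ β := by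
        rw [hb_eq, hc_eq, he_rpow, he_rpow, he_mul, he_mul, he_mul]
        congr 1 <;> linarith

end CFC

theorem stmt0_general
    {E : Type*} [NormedAddCommGroup E] [InnerProductSpace ℂ E] [CompleteSpace E]
    (A B C : E →L[ℂ] E)
    (hA0 : 0 ≤ A) (hB1 : 1 ≤ B) (hC1 : 1 ≤ C)
    (hBC : Commute B C)
    (hAB : A ≤ B) (hAC : A ≤ C)
    (α β : ℝ) (hα : 0 ≤ α) (hβ : 0 ≤ β) (hαβ : α + β = 1) :
    A ≤ CFC.rpow B α * CFC.rpow C β :=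
  CFC.le_rpow_mul_rpow_of_le_of_le hA0 (isStrictlyPositive_one.of_le hB1)
    (isStrictlyPositive_one.of_le hC1) hBC hAB hAC hα hβ hαβ

/-- **Operator interpolation inequality.**
Let `A, B, C` be self-adjoint (bounded) operators on a complex Hilbert space with
`A ≥ 0`, `B ≥ 1`, `C ≥ 1`, and suppose `B` commutes with `C`.  If `A ≤ B` and `A ≤ C`,
then for all `α, β ≥ 0` with `α + β = 1` one has `A ≤ B^α * C^β`, where the real powers
are defined by the continuous functional calculus.  The order is the Loewner order. -/
theorem stmt0
    {E : Type*} [NormedAddCommGroup E] [InnerProductSpace ℂ E] [CompleteSpace E]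
    (A B C : E →L[ℂ] E)
    (hA : IsSelfAdjoint A) (hB : IsSelfAdjoint B) (hC : IsSelfAdjoint C)
    (hA0 : 0 ≤ A) (hB1 : 1 ≤ B) (hC1 : 1 ≤ C)
    (hBC : Commute B C)
    (hAB : A ≤ B) (hAC : A ≤ C)
    (α β : ℝ) (hα : 0 ≤ α) (hβ : 0 ≤ β) (hαβ : α + β = 1) :
    A ≤ CFC.rpow B α * CFC.rpow C β :=
  stmt0_general A B C hA0 hB1 hC1 hBC hAB hAC α β hα hβ hαβ
end

section
/- Let φ ∈ H¹(ℝ³) and define φ^κ = exp(−κ|p|/N) φ for κ, N > 0. Then ‖φ^κ‖_{L²} ≤ ‖φ‖_{L²}, and for every integer k ≥ 2 there is a constant C^k (with C universal) such that ⟨φ^κ, (1+p²)^{k/2} φ^κ⟩ ≤ C^k (1 + k! (N/κ)^{k−2}) ‖φ‖_{H¹}². -/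
open MeasureTheory

/-! Both claims are pointwise bounds on Fourier multipliers, integrated against `|f|²`. The first
is `e^{−2κ|ξ|/N} ≤ 1`. For the second write `r = |ξ|`, `k = m + 2` and `a = 2κ/N`: then
`(1+r²)^{k/2} ≤ (1+r)^k ≤ 2(1+r²) · 2^m (1 + r^m)`, and a single term of the exponential series
gives `r^m e^{−ar} ≤ m!/a^m`, so `C = 2` works. -/

lemma pow_mul_exp_neg_mul_le {a r : ℝ} (ha : 0 < a) (hr : 0 ≤ r) (m : ℕ) :
    r ^ m * Real.exp (-(a * r)) ≤ m.factorial / a ^ m := by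
  have h := Real.pow_div_factorial_le_exp (x := a * r) (by positivity) m
  rw [div_le_iff₀ (by positivity), mul_pow] at h
  rw [Real.exp_neg, le_div_iff₀ (by positivity), ← div_eq_mul_inv,
    div_mul_eq_mul_div, div_le_iff₀ (Real.exp_pos _)]
  linarith

lemma one_add_norm_sq_rpow_le {E : Type*} [NormedAddCommGroup E] (x : E) (k : ℕ) :
    (1 + ‖x‖ ^ 2) ^ ((k : ℝ) / 2) ≤ (1 + ‖x‖) ^ k := by
  rw [Real.rpow_div_two_eq_sqrt _ (by positivity), Real.rpow_natCast]
  exact pow_le_pow_left₀ (Real.sqrt_nonneg _) (sqrt_one_add_norm_sq_le x) k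

lemma one_add_pow_le {r : ℝ} (hr : 0 ≤ r) (m : ℕ) : (1 + r) ^ m ≤ 2 ^ m * (1 + r ^ m) := by
  calc (1 + r) ^ m ≤ 2 ^ (m - 1) * (1 ^ m + r ^ m) := add_pow_le zero_le_one hr m
    _ ≤ 2 ^ m * (1 + r ^ m) := by
      rw [one_pow]; gcongr
      · norm_num
      · omega

lemma one_add_norm_sq_rpow_mul_exp_le {E : Type*} [NormedAddCommGroup E] (x : E) {a : ℝ}
    (ha : 0 < a) {k : ℕ} (hk : 2 ≤ k) :
    (1 + ‖x‖ ^ 2) ^ ((k : ℝ) / 2) * Real.exp (-(a * ‖x‖))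
      ≤ 2 ^ k * (1 + (k - 2).factorial / a ^ (k - 2)) * (1 + ‖x‖ ^ 2) := by
  obtain ⟨m, rfl⟩ := Nat.exists_eq_add_of_le' hk
  set e := Real.exp (-(a * ‖x‖))
  have he : e ≤ 1 := Real.exp_le_one_iff.mpr (by have := norm_nonneg x; nlinarith)
  have hdecay : (1 + ‖x‖) ^ m * e ≤ 2 ^ m * (1 + m.factorial / a ^ m) :=
    calc (1 + ‖x‖) ^ m * e ≤ 2 ^ m * (1 + ‖x‖ ^ m) * e := by
          gcongr; exact one_add_pow_le (norm_nonneg x) m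
      _ = 2 ^ m * (e + ‖x‖ ^ m * e) := by ring
      _ ≤ 2 ^ m * (1 + m.factorial / a ^ m) := by
          gcongr; exact pow_mul_exp_neg_mul_le ha (norm_nonneg x) m
  have hsq : (1 + ‖x‖) ^ 2 ≤ 2 * (1 + ‖x‖ ^ 2) := by simpa using add_sq_le (a := 1) (b := ‖x‖)
  calc (1 + ‖x‖ ^ 2) ^ (((m + 2 : ℕ) : ℝ) / 2) * e ≤ (1 + ‖x‖) ^ (m + 2) * e := by
        gcongr; exact one_add_norm_sq_rpow_le x _
    _ = (1 + ‖x‖) ^ 2 * ((1 + ‖x‖) ^ m * e) := by ring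
    _ ≤ (2 * (1 + ‖x‖ ^ 2)) * (2 ^ m * (1 + m.factorial / a ^ m)) := by gcongr
    _ = 2 ^ (m + 1) * (1 + m.factorial / a ^ m) * (1 + ‖x‖ ^ 2) := by ring
    _ ≤ 2 ^ (m + 2) * (1 + (m + 2 - 2).factorial / a ^ (m + 2 - 2)) * (1 + ‖x‖ ^ 2) := by
        rw [Nat.add_sub_cancel]; gcongr <;> norm_num

lemma one_add_norm_sq_rpow_mul_exp_div_le {E : Type*} [NormedAddCommGroup E] (x : E) {κ N : ℝ}
    (hκ : 0 < κ) (hN : 0 < N) {k : ℕ} (hk : 2 ≤ k) :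
    (1 + ‖x‖ ^ 2) ^ ((k : ℝ) / 2) * Real.exp (-2 * κ * ‖x‖ / N)
      ≤ 2 ^ k * (1 + k.factorial * (N / κ) ^ (k - 2)) * (1 + ‖x‖ ^ 2) := by
  have h := one_add_norm_sq_rpow_mul_exp_le x (a := 2 * κ / N) (by positivity) hk
  rw [show -(2 * κ / N * ‖x‖) = -2 * κ * ‖x‖ / N by ring] at h
  refine h.trans ?_
  rw [div_eq_mul_inv, ← inv_pow, inv_div]
  gcongr
  · exact Nat.sub_le k 2
  · linarith

/-- Bounds on the regularized wave function `φ^κ = e^{−κ|p|/N} φ`, stated on the Fourier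
side (by Plancherel): here `f = φ̂`, so `‖φ^κ‖² = ∫ e^{−2κ|ξ|/N}|f|²`,
`⟨φ^κ,(1+p²)^{k/2}φ^κ⟩ = ∫ (1+|ξ|²)^{k/2} e^{−2κ|ξ|/N} |f|²` and
`‖φ‖_{H¹}² = ∫ (1+|ξ|²)|f|²`.  There is a universal constant `C` such that
`‖φ^κ‖ ≤ ‖φ‖` and, for every `k ≥ 2`,
`⟨φ^κ,(1+p²)^{k/2}φ^κ⟩ ≤ C^k (1 + k! (N/κ)^{k−2}) ‖φ‖_{H¹}²`. -/
theorem stmt4 :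
    ∃ C : ℝ, 0 < C ∧
      ∀ (κ N : ℝ), 0 < κ → 0 < N →
        ∀ f : EuclideanSpace ℝ (Fin 3) → ℂ,
          AEStronglyMeasurable f volume →
          Integrable (fun ξ => (1 + ‖ξ‖ ^ 2) * ‖f ξ‖ ^ 2) →
          (∫ ξ, Real.exp (-2 * κ * ‖ξ‖ / N) * ‖f ξ‖ ^ 2) ≤ (∫ ξ, ‖f ξ‖ ^ 2) ∧
          ∀ k : ℕ, 2 ≤ k →
            (∫ ξ, (1 + ‖ξ‖ ^ 2) ^ ((k : ℝ) / 2) * Real.exp (-2 * κ * ‖ξ‖ / N) * ‖f ξ‖ ^ 2)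
              ≤ C ^ k * (1 + (Nat.factorial k : ℝ) * (N / κ) ^ (k - 2)) *
                  (∫ ξ, (1 + ‖ξ‖ ^ 2) * ‖f ξ‖ ^ 2) := by
  refine ⟨2, two_pos, fun κ N hκ hN f hf hH1 => ⟨?_, fun k hk => ?_⟩⟩
  · have hL2 : Integrable (fun ξ => ‖f ξ‖ ^ 2) :=
      hH1.mono' (hf.norm.pow 2) (ae_of_all _ fun ξ => by
        rw [Real.norm_of_nonneg (by positivity)]
        nlinarith [sq_nonneg ‖ξ‖, sq_nonneg ‖f ξ‖])
    refine integral_mono_of_nonneg (ae_of_all _ fun _ => by positivity) hL2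
      (ae_of_all _ fun ξ => mul_le_of_le_one_left (by positivity) ?_)
    exact Real.exp_le_one_iff.mpr (div_nonpos_of_nonpos_of_nonneg
      (by nlinarith [norm_nonneg ξ]) hN.le)
  · rw [← integral_const_mul]
    refine integral_mono_of_nonneg (ae_of_all _ fun _ => by positivity) (hH1.const_mul _)
      (ae_of_all _ fun ξ => ?_)
    have h := mul_le_mul_of_nonneg_right
      (one_add_norm_sq_rpow_mul_exp_div_le ξ hκ hN hk) (sq_nonneg ‖f ξ‖)
    linarith
end
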